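/- arXiv:2401.00818 — 5 statements merged into one kernel-verified Lean document; each statement's English description precedes it below -/
import Mathlib

section
/- Let (a_n)_{n≥0} be a real sequence such that n·a_{n−1} = O(a_n) as n → ∞, and such that for all but finitely many n the quantity x_k = |a_k·a_{n−k}| is decreasing in k for k < n/2 (i.e. |a_{k+1}·a_{n−k−1}| ≤ |a_k·a_{n−k}| whenever k+1 ≤ n/2). Then (a_n) is gargantuan. -/
/-!
Write `x k = |a k * a (n - k)|`. The sum over `r ≤ k ≤ n - r` is symmetric under `k ↦ n - k`,
and `x` decreases on the first half, so it is at most `2 x r + n x (r + 1)`. The first term is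
`O(a (n - r))` trivially; in the second, `n |a (n - r - 1)| ≤ 2 (n - r) |a (n - r - 1)|`, which is
`O(a (n - r))` by the growth hypothesis `n a (n - 1) = O(a n)`. The same hypothesis gives
`a (n - 1) = o(a n)`, hence `a (n - 1) / a n → 0`.
-/

open Filter Asymptotics Finset

/-- A real sequence `u` is *gargantuan* if `u (n-1) / u n → 0` and, for every `r ≥ 1`,
`∑_{k=r}^{n-r} |u k * u (n-k)| = O(u (n-r))` as `n → ∞`. -/
def Gargantuan (u : ℕ → ℝ) : Prop :=
  Tendsto (fun n => u (n - 1) / u n) atTop (nhds 0) ∧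
    ∀ r : ℕ, 1 ≤ r →
      (fun n => ∑ k ∈ Finset.Icc r (n - r), |u k * u (n - k)|) =O[atTop]
        fun n => u (n - r)

/-- The exponential `exp C` of a formal power series `C` (intended for `C` with zero
constant term): the coefficient of `X^n` is `∑_{k=0}^{n} [X^n] (C^k) / k!`. -/
noncomputable def expPS (C : PowerSeries ℝ) : PowerSeries ℝ :=
  PowerSeries.mk fun n =>
    ∑ k ∈ Finset.range (n + 1), (PowerSeries.coeff (R := ℝ) n (C ^ k)) / (Nat.factorial k)

open scoped Topology

section
variable {a : ℕ → ℝ}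

theorem tendsto_pred_div_of_isBigO_natCast_mul
    (h : (fun n : ℕ => (n : ℝ) * a (n - 1)) =O[atTop] fun n => a n) :
    Tendsto (fun n => a (n - 1) / a n) atTop (𝓝 0) := by
  have hinv : (fun n : ℕ => 1 / (n : ℝ)) =o[atTop] fun _ => (1 : ℝ) :=
    (isLittleO_one_iff ℝ).2 tendsto_one_div_atTop_nhds_zero_nat
  have hpred : (fun n => a (n - 1)) =o[atTop] fun n => a n := by
    refine (hinv.mul_isBigO h).congr' ?_ (by simp)
    filter_upwards [eventually_ge_atTop 1] with n hn
    have : (n : ℝ) ≠ 0 := by positivity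
    field_simp
  exact hpred.tendsto_div_nhds_zero

theorem isBigO_natCast_mul_sub_succ
    (h : (fun n : ℕ => (n : ℝ) * a (n - 1)) =O[atTop] fun n => a n) (r : ℕ) :
    (fun n : ℕ => (n : ℝ) * a (n - (r + 1))) =O[atTop] fun n => a (n - r) := by
  have hshift := h.comp_tendsto (tendsto_sub_atTop_nat r)
  have hn : (fun n : ℕ => (n : ℝ)) =O[atTop] fun n => ((n - r : ℕ) : ℝ) := by
    refine IsBigO.of_bound 2 ?_
    filter_upwards [eventually_ge_atTop (2 * r)] with n hn
    simp only [Real.norm_natCast]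
    exact_mod_cast (by omega : n ≤ 2 * (n - r))
  simpa [Function.comp_def, Nat.sub_sub] using (hn.mul (isBigO_refl _ _)).trans hshift

variable {n : ℕ}

theorem abs_mul_sub_le_of_le
    (hdec : ∀ k, 2 * (k + 1) ≤ n → |a (k + 1) * a (n - k - 1)| ≤ |a k * a (n - k)|)
    {b j : ℕ} (hbj : b ≤ j) (hj : 2 * j ≤ n) :
    |a j * a (n - j)| ≤ |a b * a (n - b)| := by
  induction j, hbj using Nat.le_induction with
  | base => exact le_rfl
  | succ j hbj ih =>
    rw [← Nat.sub_sub]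
    exact (hdec j hj).trans (ih (by omega))

theorem sum_Icc_abs_mul_sub_le
    (hdec : ∀ k, 2 * (k + 1) ≤ n → |a (k + 1) * a (n - k - 1)| ≤ |a k * a (n - k)|)
    {r : ℕ} (hrn : 2 * r + 2 ≤ n) :
    ∑ k ∈ Icc r (n - r), |a k * a (n - k)| ≤
      2 * |a r * a (n - r)| + n * |a (r + 1) * a (n - (r + 1))| := by
  set x : ℕ → ℝ := fun k => |a k * a (n - k)|
  have hsymm : ∀ k ≤ n, x (n - k) = x k := fun k hk => by
    simp only [x, Nat.sub_sub_self hk, mul_comm]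
  -- by the symmetry `k ↔ n - k`, monotonicity on the first half bounds every middle term
  have hmid : ∀ k ∈ Ioo r (n - r), x k ≤ x (r + 1) := by
    intro k hk
    rw [mem_Ioo] at hk
    rcases le_or_gt (2 * k) n with hk2 | hk2
    · exact abs_mul_sub_le_of_le hdec (by omega) hk2
    · rw [← hsymm k (by omega)]
      exact abs_mul_sub_le_of_le hdec (by omega) (by omega)
  have hcard : ((Ioo r (n - r)).card : ℝ) ≤ n := by
    rw [Nat.card_Ioo]
    exact_mod_cast (by omega : n - r - r - 1 ≤ n)
  have hxr : 0 ≤ x (r + 1) := abs_nonneg _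
  calc ∑ k ∈ Icc r (n - r), x k = x r + (∑ k ∈ Ioo r (n - r), x k + x (n - r)) := by
        rw [Icc_eq_cons_Ioc (by omega), sum_cons, Ioc_eq_cons_Ioo (by omega), sum_cons]
        ring
    _ ≤ x r + ((Ioo r (n - r)).card • x (r + 1) + x r) := by
        gcongr
        · exact sum_le_card_nsmul _ _ _ hmid
        · exact (hsymm r (by omega)).le
    _ ≤ 2 * x r + n * x (r + 1) := by
        rw [nsmul_eq_mul]
        nlinarith
end

/-- a sufficient condition for a sequence to be gargantuan. -/
theorem sufficient_condition_gargantuan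
    (a : ℕ → ℝ)
    (h1 : (fun n : ℕ => (n : ℝ) * a (n - 1)) =O[atTop] fun n => a n)
    (h2 : ∀ᶠ n in atTop, ∀ k, 2 * (k + 1) ≤ n →
      |a (k + 1) * a (n - k - 1)| ≤ |a k * a (n - k)|) :
    Gargantuan a := by
  refine ⟨tendsto_pred_div_of_isBigO_natCast_mul h1, fun r _ => ?_⟩
  have hsum : (fun n => ∑ k ∈ Icc r (n - r), |a k * a (n - k)|) =O[atTop]
      fun n => 2 * |a r * a (n - r)| + n * |a (r + 1) * a (n - (r + 1))| := by
    refine IsBigO.of_bound' ?_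
    filter_upwards [h2, eventually_ge_atTop (2 * r + 2)] with n hdec hrn
    rw [Real.norm_of_nonneg (sum_nonneg fun _ _ => abs_nonneg _),
      Real.norm_of_nonneg (by positivity)]
    exact sum_Icc_abs_mul_sub_le hdec hrn
  have hfirst : (fun n => 2 * |a r * a (n - r)|) =O[atTop] fun n => a (n - r) :=
    (isBigO_abs_left.2 ((isBigO_refl _ _).const_mul_left (a r))).const_mul_left 2
  have hsecond : (fun n : ℕ => n * |a (r + 1) * a (n - (r + 1))|) =O[atTop]
      fun n => a (n - r) := by
    refine isBigO_abs_left.1 (((isBigO_abs_left.2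
      (isBigO_natCast_mul_sub_succ h1 r)).const_mul_left |a (r + 1)|).congr_left fun n => ?_)
    simp only [abs_mul, abs_abs, Nat.abs_cast]
    ring
  exact hsum.trans (hfirst.add hsecond)
end

section
/- If (a_n)_{n≥0} and (b_n)_{n≥0} are two non-negative gargantuan real sequences, then the pointwise product sequence (a_n·b_n)_{n≥0} is a non-negative gargantuan sequence. -/
/-! The ratio condition is multiplicative, and the convolution sum of `u * v` is bounded termwise
by the product of the convolution sums of `|u|` and `|v|`, so the `O(u (n - r))` and
`O(v (n - r))` bounds multiply. -/

open Filter Asymptotics Finset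

theorem Finset.sum_mul_le_sum_mul_sum {ι R : Type*} [CommSemiring R] [PartialOrder R]
    [IsOrderedRing R] {s : Finset ι} {f g : ι → R} (hf : ∀ i ∈ s, 0 ≤ f i)
    (hg : ∀ i ∈ s, 0 ≤ g i) :
    ∑ i ∈ s, f i * g i ≤ (∑ i ∈ s, f i) * ∑ i ∈ s, g i := by
  rw [Finset.sum_mul]
  exact Finset.sum_le_sum fun i hi =>
    mul_le_mul_of_nonneg_left (Finset.single_le_sum hg hi) (hf i hi)

theorem sum_abs_mul_mul_le (u v : ℕ → ℝ) (s : Finset ℕ) (n : ℕ) :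
    ∑ k ∈ s, |u k * v k * (u (n - k) * v (n - k))| ≤
      (∑ k ∈ s, |u k * u (n - k)|) * ∑ k ∈ s, |v k * v (n - k)| := by
  calc ∑ k ∈ s, |u k * v k * (u (n - k) * v (n - k))|
      = ∑ k ∈ s, |u k * u (n - k)| * |v k * v (n - k)| := by
        refine Finset.sum_congr rfl fun k _ => ?_
        rw [← abs_mul]
        congr 1
        ring
    _ ≤ _ := Finset.sum_mul_le_sum_mul_sum (fun _ _ => abs_nonneg _) fun _ _ => abs_nonneg _

theorem Gargantuan.mul {u v : ℕ → ℝ} (hu : Gargantuan u) (hv : Gargantuan v) :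
    Gargantuan (fun n => u n * v n) := by
  refine ⟨?_, fun r hr => ?_⟩
  · simpa only [mul_zero, div_mul_div_comm] using hu.1.mul hv.1
  · refine (isBigO_of_le _ fun n => ?_).trans ((hu.2 r hr).mul (hv.2 r hr))
    rw [Real.norm_eq_abs, Real.norm_eq_abs,
      abs_of_nonneg (Finset.sum_nonneg fun _ _ => abs_nonneg _)]
    exact (sum_abs_mul_mul_le u v _ n).trans (le_abs_self _)

/-- the product of two non-negative gargantuan sequences is
non-negative gargantuan. -/
theorem gargantuan_mul
    (a b : ℕ → ℝ)
    (ha : ∀ n, 0 ≤ a n) (hb : ∀ n, 0 ≤ b n)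
    (hga : Gargantuan a) (hgb : Gargantuan b) :
    (∀ n, 0 ≤ a n * b n) ∧ Gargantuan (fun n => a n * b n) :=
  ⟨fun n => mul_nonneg (ha n) (hb n), hga.mul hgb⟩
end

section
/- (Bender's theorem.) Let (u_n)_{n≥1} be a real sequence with u_n ≠ 0 for all n ≥ 1 which is gargantuan, and let U = Σ_{n≥1} u_n X^n ∈ ℝ[[X]]. Let (f_k)_{k≥0} be a real sequence whose power series Σ_k f_k x^k has positive radius of convergence, and define the formal power series V = Σ_{n≥0} v_n X^n = Σ_{k≥0} f_k U^k and W = Σ_{n≥0} w_n X^n = Σ_{k≥0} (k+1)·f_{k+1}·U^k (both well defined since U has zero constant term). Then for every integer r ≥ 0, v_n = Σ_{k=0}^{r} w_k·u_{n−k} + O(u_{n−r−1}) as n → ∞, and the sequence (v_n) is gargantuan. -/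
/-!
Write `U = ∑ u n Xⁿ`. The gargantuan condition forces `u` to outgrow every geometric sequence
and, by induction on `k`, gives `|[Xⁿ] U^(k+1)| ≤ B^(k+1) |u (n - k)|`. Expanding
`U^(k+2) = U · U^(k+1)` and cutting the convolution into two ends of length `r + 1` and a middle,
induction on `k` yields Bender's expansion for the powers of `U`,
`[Xⁿ] U^(k+1) = (k + 1) ∑_{j ≤ r} [Xʲ] Uᵏ u (n - j) + O(u (n - r - 1))`: the middle is
`O(u (n - r - 1))` by the gargantuan condition and the ends are handled by the induction
hypothesis. Summing against `f (k + 1)` for `k ≤ r` gives the expansion of `v`; the terms with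
`k > r` are bounded by the estimate above, since `|f k| Rᵏ` is bounded.

If `m` is the first index with `w m ≠ 0`, the expansion of order `m` gives `v =Θ u (· - m)`, and
such a sequence is again gargantuan. If `w = 0`, then `f (k + 1) = 0` for all `k` because
`[Xᵏ] Uᵏ = u 1 ^ k ≠ 0`, so `v n = 0` for `n ≥ 1`.
-/

open Filter Asymptotics Finset

open PowerSeries

variable {u : ℕ → ℝ}

theorem sum_Icc_eq_add_add_reflect {M : Type*} [AddCommMonoid M] (g : ℕ → M) {a b n : ℕ}
    (hab : a ≤ b) (hbn : 2 * b ≤ n + 1) :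
    ∑ k ∈ Icc a (n - a), g k
      = ∑ k ∈ Ico a b, g k + ∑ k ∈ Icc b (n - b), g k + ∑ k ∈ Ico a b, g (n - k) := by
  have h1 : Icc a (n - a) = Ico a (n + 1 - a) := by ext; simp; omega
  have h2 : Icc b (n - b) = Ico b (n + 1 - b) := by ext; simp; omega
  rw [h1, h2, sum_Ico_reflect g a (by omega), sum_Ico_consecutive g hab (by omega),
    sum_Ico_consecutive g (by omega) (by omega)]

theorem coeff_mk_pow_succ (u : ℕ → ℝ) (n k : ℕ) :
    coeff n (PowerSeries.mk u ^ (k + 1))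
      = ∑ j ∈ range (n + 1), u j * coeff (n - j) (PowerSeries.mk u ^ k) := by
  rw [pow_succ', coeff_mul, Nat.sum_antidiagonal_eq_sum_range_succ_mk]
  simp only [coeff_mk]

theorem coeff_mk_pow_eq (hu0 : u 0 = 0) (n k : ℕ) :
    coeff n (PowerSeries.mk u ^ k)
      = if k ≤ n then coeff (n - k) (PowerSeries.mk (fun i => u (i + 1)) ^ k) else 0 := by
  have h : PowerSeries.mk u = X * PowerSeries.mk (fun i => u (i + 1)) := by
    ext (_ | i) <;> simp [hu0, coeff_succ_X_mul]
  rw [h, mul_pow, coeff_X_pow_mul']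

theorem coeff_mk_pow_of_lt (hu0 : u 0 = 0) {n k : ℕ} (h : n < k) :
    coeff n (PowerSeries.mk u ^ k) = 0 := by
  rw [coeff_mk_pow_eq hu0, if_neg (by omega)]

theorem coeff_mk_pow_self (hu0 : u 0 = 0) (k : ℕ) :
    coeff k (PowerSeries.mk u ^ k) = u 1 ^ k := by
  simp [coeff_mk_pow_eq hu0]

theorem eq_zero_of_sum_mul_coeff_mk_pow_eq_zero (hu0 : u 0 = 0) (hu1 : u 1 ≠ 0) {g : ℕ → ℝ}
    (hg : ∀ n, ∑ k ∈ range (n + 1), g k * coeff n (PowerSeries.mk u ^ k) = 0) (k : ℕ) :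
    g k = 0 := by
  induction k using Nat.strong_induction_on with
  | _ k ih =>
    have h := hg k
    rw [sum_range_succ, sum_eq_zero fun j hj => by rw [ih j (mem_range.1 hj), zero_mul], zero_add,
      coeff_mk_pow_self hu0] at h
    exact (mul_eq_zero.1 h).resolve_right (pow_ne_zero _ hu1)

theorem sum_coeff_mk_pow_succ_mul (u : ℕ → ℝ) (k r n : ℕ) :
    ∑ j ∈ range (r + 1), coeff j (PowerSeries.mk u ^ (k + 1)) * u (n - j)
      = ∑ m ∈ range (r + 1),
          u m * ∑ i ∈ range (r - m + 1), coeff i (PowerSeries.mk u ^ k) * u (n - m - i) := by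
  calc _ = ∑ j ∈ range (r + 1), ∑ m ∈ range (j + 1),
          u m * coeff (j - m) (PowerSeries.mk u ^ k) * u (n - m - (j - m)) := by
        refine sum_congr rfl fun j _ => ?_
        rw [coeff_mk_pow_succ, sum_mul]
        exact sum_congr rfl fun m hm => by
          rw [show n - m - (j - m) = n - j by simp at hm; omega]
    _ = _ := by
        have hflip := sum_range_diag_flip (r + 1)
          fun m i => u m * coeff i (PowerSeries.mk u ^ k) * u (n - m - i)
        rw [hflip]
        refine sum_congr rfl fun m hm => ?_
        rw [show r + 1 - m = r - m + 1 by simp at hm; omega, mul_sum]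
        exact sum_congr rfl fun i _ => by ring

theorem coeff_mk_pow_succ_succ_sub (u : ℕ → ℝ) (k r n : ℕ) (hn : 2 * (r + 1) ≤ n + 1) :
    coeff n (PowerSeries.mk u ^ (k + 1 + 1))
        - ((k : ℝ) + 2) * ∑ j ∈ range (r + 1), coeff j (PowerSeries.mk u ^ (k + 1)) * u (n - j)
      = ∑ m ∈ range (r + 1), u m * (coeff (n - m) (PowerSeries.mk u ^ (k + 1))
          - ((k : ℝ) + 1)
            * ∑ i ∈ range (r - m + 1), coeff i (PowerSeries.mk u ^ k) * u (n - m - i))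
        + ∑ m ∈ Icc (r + 1) (n - (r + 1)), u m * coeff (n - m) (PowerSeries.mk u ^ (k + 1)) := by
  -- The reflected end of the convolution `U * U ^ (k + 1)` is one copy of the sum on the left;
  -- the first end contains the other `k + 1` copies, by `sum_coeff_mk_pow_succ_mul`.
  have hsplit := sum_Icc_eq_add_add_reflect
    (fun m => u m * coeff (n - m) (PowerSeries.mk u ^ (k + 1))) (Nat.zero_le (r + 1)) hn
  have hreflect : ∑ m ∈ range (r + 1),
        u (n - m) * coeff (n - (n - m)) (PowerSeries.mk u ^ (k + 1))
      = ∑ j ∈ range (r + 1), coeff j (PowerSeries.mk u ^ (k + 1)) * u (n - j) :=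
    sum_congr rfl fun m hm => by rw [Nat.sub_sub_self (by simp at hm; omega), mul_comm]
  have hrange : range (n + 1) = Icc 0 (n - 0) := by ext; simp
  rw [← range_eq_Ico, hreflect] at hsplit
  rw [coeff_mk_pow_succ, hrange, hsplit, sum_coeff_mk_pow_succ_mul]
  simp only [mul_sub, sum_sub_distrib, mul_left_comm _ ((k : ℝ) + 1), ← mul_sum]
  ring

theorem gargantuan_of_eq_zero {v : ℕ → ℝ} (hv : ∀ n, 1 ≤ n → v n = 0) : Gargantuan v := by
  refine ⟨tendsto_const_nhds.congr' ?_, fun r hr => (isBigO_zero _ _).congr_left fun n => ?_⟩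
  · -- the ratio is eventually `v (n - 1) / 0 = 0`
    filter_upwards [eventually_ge_atTop 1] with n hn
    rw [hv n hn, div_zero]
  · rw [sum_eq_zero fun k hk => by rw [hv k (by simp at hk; omega), zero_mul, abs_zero]]

namespace Gargantuan

theorem isLittleO_sub_one (hu : Gargantuan u) (hne : ∀ n, 1 ≤ n → u n ≠ 0) :
    (fun n => u (n - 1)) =o[atTop] u :=
  (isLittleO_iff_tendsto' (eventually_atTop.2 ⟨1, fun n hn h => absurd h (hne n hn)⟩)).2 hu.1

theorem isBigO_sub (hu : Gargantuan u) (hne : ∀ n, 1 ≤ n → u n ≠ 0) :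
    ∀ j, (fun n => u (n - j)) =O[atTop] u
  | 0 => by simpa using isBigO_refl u atTop
  | j + 1 => by
    have h := (hu.isLittleO_sub_one hne).isBigO.comp_tendsto (tendsto_sub_atTop_nat j)
    exact (h.congr_left fun n => by simp [Nat.sub_sub]).trans (hu.isBigO_sub hne j)

theorem exists_abs_sub_le (hu : Gargantuan u) (hne : ∀ n, 1 ≤ n → u n ≠ 0) (j : ℕ) :
    ∃ K, ∀ n, |u (n - j)| ≤ K * |u n| := by
  have h := hu.isBigO_sub hne j
  rw [← Nat.cofinite_eq_atTop, isBigO_cofinite_iff] at h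
  · simpa only [Real.norm_eq_abs] using h
  · intro n hn
    obtain rfl : n = 0 := by by_contra h; exact hne n (by omega) hn
    simpa using hn

theorem exists_sum_Icc_abs_mul_le (hu : Gargantuan u) (hne : ∀ n, 1 ≤ n → u n ≠ 0) :
    ∃ A, ∀ n, ∑ j ∈ Icc 1 (n - 1), |u j * u (n - j)| ≤ A * |u (n - 1)| := by
  have h := hu.2 1 le_rfl
  rw [← Nat.cofinite_eq_atTop, isBigO_cofinite_iff] at h
  · obtain ⟨A, hA⟩ := h
    refine ⟨A, fun n => ?_⟩
    have hpos : 0 ≤ ∑ j ∈ Icc 1 (n - 1), |u j * u (n - j)| := sum_nonneg fun _ _ => abs_nonneg _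
    simpa only [Real.norm_eq_abs, abs_of_nonneg hpos] using hA n
  · intro n hn
    have : n - 1 = 0 := by by_contra h; exact hne _ (by omega) hn
    simp [this]

theorem exists_pow_mul_abs_le (hu : Gargantuan u) (hne : ∀ n, 1 ≤ n → u n ≠ 0) {ρ : ℝ}
    (hρ : 0 < ρ) : ∃ K ≥ 0, ∃ N, ∀ n ≥ N, ∀ m ≤ n, ρ ^ (n - m) * |u m| ≤ K * |u n| := by
  obtain ⟨N, hN⟩ := eventually_atTop.1 <|
    ((hu.isLittleO_sub_one hne).def (inv_pos.2 hρ)).and (eventually_ge_atTop 1)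
  have step (m : ℕ) (hm : N ≤ m) : ∀ n ≥ m, ρ ^ (n - m) * |u m| ≤ |u n| := by
    refine Nat.le_induction (by simp) fun n hmn ih => ?_
    have h := (hN (n + 1) (by omega)).1
    simp only [Real.norm_eq_abs, add_tsub_cancel_right] at h
    calc ρ ^ (n + 1 - m) * |u m| = ρ * (ρ ^ (n - m) * |u m|) := by
          rw [Nat.sub_add_comm hmn, pow_succ]; ring
      _ ≤ ρ * |u n| := by gcongr
      _ ≤ |u (n + 1)| := by rwa [← le_inv_mul_iff₀ hρ]
  -- `step` handles `N ≤ m`; the finitely many `m < N` are compared with `u N` through `S`.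
  have huN : 0 < |u N| := abs_pos.2 (hne N (hN N le_rfl).2)
  set S := ∑ m ∈ range N, ρ ^ (N - m) * |u m| / |u N|
  have hS : 0 ≤ S := sum_nonneg fun _ _ => by positivity
  refine ⟨1 + S, by positivity, N, fun n hn m hmn => ?_⟩
  rcases le_or_gt N m with hm | hm
  · nlinarith [step m hm n hmn, abs_nonneg (u n)]
  · have hterm : ρ ^ (N - m) * |u m| ≤ S * |u N| := by
      rw [← div_le_iff₀ huN]
      exact single_le_sum (f := fun m => ρ ^ (N - m) * |u m| / |u N|)
        (fun _ _ => by positivity) (mem_range.2 hm)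
    calc ρ ^ (n - m) * |u m| = ρ ^ (n - N) * (ρ ^ (N - m) * |u m|) := by
          rw [← mul_assoc, ← pow_add]; congr 2; omega
      _ ≤ ρ ^ (n - N) * (S * |u N|) := by gcongr
      _ = S * (ρ ^ (n - N) * |u N|) := by ring
      _ ≤ S * |u n| := by gcongr; exact step N le_rfl n hn
      _ ≤ (1 + S) * |u n| := by nlinarith [abs_nonneg (u n)]

theorem exists_abs_coeff_mk_pow_succ_le_pow_mul (hu : Gargantuan u) (hne : ∀ n, 1 ≤ n → u n ≠ 0)
    (hu0 : u 0 = 0) :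
    ∃ B, 0 < B ∧ ∀ k n, |coeff n (PowerSeries.mk u ^ (k + 1))| ≤ B ^ (k + 1) * |u (n - k)| := by
  obtain ⟨A, hA⟩ := hu.exists_sum_Icc_abs_mul_le hne
  set B := max A 1
  refine ⟨B, by positivity, fun k => ?_⟩
  induction k with
  | zero =>
    intro n
    simpa [coeff_mk] using le_mul_of_one_le_left (abs_nonneg (u n)) (le_max_right A 1)
  | succ k ih =>
    intro n
    have hsupp : ∑ j ∈ Icc 1 (n - k - 1), |u j * u (n - k - j)|
        = ∑ j ∈ range (n + 1), |u j * u (n - k - j)| := by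
      refine sum_subset (fun j hj => by simp at hj ⊢; omega) fun j _ hj => ?_
      rcases Nat.eq_zero_or_pos j with rfl | hj0
      · simp [hu0]
      · rw [show n - k - j = 0 by simp at hj; omega, hu0, mul_zero, abs_zero]
    rw [coeff_mk_pow_succ]
    calc |∑ j ∈ range (n + 1), u j * coeff (n - j) (PowerSeries.mk u ^ (k + 1))|
        ≤ ∑ j ∈ range (n + 1), |u j| * (B ^ (k + 1) * |u (n - j - k)|) := by
          refine (abs_sum_le_sum_abs _ _).trans (sum_le_sum fun j _ => ?_)
          rw [abs_mul]
          exact mul_le_mul_of_nonneg_left (ih _) (abs_nonneg _)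
      _ = B ^ (k + 1) * ∑ j ∈ Icc 1 (n - k - 1), |u j * u (n - k - j)| := by
          rw [hsupp, mul_sum]
          exact sum_congr rfl fun j _ => by rw [abs_mul, Nat.sub_right_comm]; ring
      _ ≤ B ^ (k + 1) * (B * |u (n - k - 1)|) := by
          gcongr
          exact (hA (n - k)).trans (by gcongr; exact le_max_left A 1)
      _ = B ^ (k + 1 + 1) * |u (n - (k + 1))| := by rw [Nat.sub_sub]; ring

theorem exists_abs_coeff_mk_pow_succ_le (hu : Gargantuan u)
    (hne : ∀ n, 1 ≤ n → u n ≠ 0) (hu0 : u 0 = 0) (k : ℕ) :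
    ∃ C, ∀ n, |coeff n (PowerSeries.mk u ^ (k + 1))| ≤ C * |u n| := by
  obtain ⟨B, hB, hcoeff⟩ := hu.exists_abs_coeff_mk_pow_succ_le_pow_mul hne hu0
  obtain ⟨K, hK⟩ := hu.exists_abs_sub_le hne k
  exact ⟨B ^ (k + 1) * K, fun n => (hcoeff k n).trans <| by
    rw [mul_assoc]; gcongr; exact hK n⟩

theorem isBigO_coeff_mk_pow_succ_sub (hu : Gargantuan u)
    (hne : ∀ n, 1 ≤ n → u n ≠ 0) (hu0 : u 0 = 0) :
    ∀ k r : ℕ, (fun n => coeff n (PowerSeries.mk u ^ (k + 1))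
        - ((k : ℝ) + 1) * ∑ j ∈ range (r + 1), coeff j (PowerSeries.mk u ^ k) * u (n - j))
      =O[atTop] fun n => u (n - (r + 1))
  | 0, r => (isBigO_zero _ _).congr_left fun n => by simp [coeff_mk, coeff_one]
  | k + 1, r => by
    have hnear : (fun n => ∑ m ∈ range (r + 1), u m * (coeff (n - m) (PowerSeries.mk u ^ (k + 1))
        - ((k : ℝ) + 1)
          * ∑ i ∈ range (r - m + 1), coeff i (PowerSeries.mk u ^ k) * u (n - m - i)))
        =O[atTop] fun n => u (n - (r + 1)) := by
      refine IsBigO.fun_sum fun m hm => IsBigO.const_mul_left ?_ _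
      refine ((hu.isBigO_coeff_mk_pow_succ_sub hne hu0 k (r - m)).comp_tendsto
        (tendsto_sub_atTop_nat m)).congr_right fun n => ?_
      rw [Function.comp_apply, Nat.sub_sub, show m + (r - m + 1) = r + 1 by simp at hm; omega]
    have hfar : (fun n => ∑ m ∈ Icc (r + 1) (n - (r + 1)),
        u m * coeff (n - m) (PowerSeries.mk u ^ (k + 1))) =O[atTop] fun n => u (n - (r + 1)) := by
      obtain ⟨C, hC⟩ := hu.exists_abs_coeff_mk_pow_succ_le hne hu0 k
      refine (IsBigO.of_bound C (Eventually.of_forall fun n => ?_)).trans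
        (hu.2 (r + 1) le_add_self)
      have hpos : 0 ≤ ∑ m ∈ Icc (r + 1) (n - (r + 1)), |u m * u (n - m)| :=
        sum_nonneg fun _ _ => abs_nonneg _
      rw [Real.norm_of_nonneg hpos, Real.norm_eq_abs, mul_sum]
      refine (abs_sum_le_sum_abs _ _).trans (sum_le_sum fun m _ => ?_)
      rw [abs_mul, abs_mul, mul_left_comm]
      exact mul_le_mul_of_nonneg_left (hC _) (abs_nonneg _)
    refine (hnear.add hfar).congr' ?_ EventuallyEq.rfl
    filter_upwards [eventually_ge_atTop (2 * r + 1)] with n hn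
    rw [← coeff_mk_pow_succ_succ_sub u k r n (by omega)]
    push_cast
    ring

theorem isBigO_sum_Ico_mul_coeff_mk_pow (hu : Gargantuan u)
    (hne : ∀ n, 1 ≤ n → u n ≠ 0) (hu0 : u 0 = 0) {f : ℕ → ℝ}
    (hrad : ∃ R : ℝ, 0 < R ∧ ∃ C : ℝ, ∀ k, |f k| * R ^ k ≤ C) (r : ℕ) :
    (fun n => ∑ k ∈ Ico (r + 1) n, f (k + 1) * coeff n (PowerSeries.mk u ^ (k + 1)))
      =O[atTop] fun n => u (n - (r + 1)) := by
  obtain ⟨R, hR, Cf, hCf⟩ := hrad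
  have hCf0 : 0 ≤ Cf := (by positivity : (0 : ℝ) ≤ |f 0| * R ^ 0).trans (hCf 0)
  obtain ⟨B, hB, hcoeff⟩ := hu.exists_abs_coeff_mk_pow_succ_le_pow_mul hne hu0
  -- `u` outgrows `(2 * B / R) ^ k`, which beats the bound `(B / R) ^ k` on the `k`-th term
  -- by a factor `2 ^ k`.
  obtain ⟨K, hK0, N, hK⟩ := hu.exists_pow_mul_abs_le hne (ρ := 2 * B / R) (by positivity)
  set D := Cf * (B / R) ^ (r + 2) * K
  refine IsBigO.of_bound (2 * D) ?_
  filter_upwards [eventually_ge_atTop (N + r + 1)] with n hn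
  rw [Real.norm_eq_abs, Real.norm_eq_abs]
  have hterm (k : ℕ) (hk : k ∈ Ico (r + 1) n) :
      |f (k + 1) * coeff n (PowerSeries.mk u ^ (k + 1))|
        ≤ D * |u (n - (r + 1))| * (1 / 2) ^ (k - (r + 1)) := by
    simp only [mem_Ico] at hk
    have hgeom := hK (n - (r + 1)) (by omega) (n - k) (by omega)
    rw [show n - (r + 1) - (n - k) = k - (r + 1) by omega] at hgeom
    have hpow : (B / R) ^ (k + 1)
        = (B / R) ^ (r + 2) * (1 / 2) ^ (k - (r + 1)) * (2 * B / R) ^ (k - (r + 1)) := by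
      rw [mul_assoc, ← mul_pow, show (1 / 2 : ℝ) * (2 * B / R) = B / R by ring, ← pow_add]
      congr 1; omega
    calc |f (k + 1) * coeff n (PowerSeries.mk u ^ (k + 1))|
        ≤ |f (k + 1)| * (B ^ (k + 1) * |u (n - k)|) := by
          rw [abs_mul]; exact mul_le_mul_of_nonneg_left (hcoeff k n) (abs_nonneg _)
      _ = |f (k + 1)| * R ^ (k + 1) * (B / R) ^ (k + 1) * |u (n - k)| := by
          rw [div_pow]; field_simp
      _ = |f (k + 1)| * R ^ (k + 1) * (B / R) ^ (r + 2) * (1 / 2) ^ (k - (r + 1))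
            * ((2 * B / R) ^ (k - (r + 1)) * |u (n - k)|) := by
          rw [hpow]; ring
      _ ≤ Cf * (B / R) ^ (r + 2) * (1 / 2) ^ (k - (r + 1)) * (K * |u (n - (r + 1))|) := by
          gcongr; exact hCf (k + 1)
      _ = D * |u (n - (r + 1))| * (1 / 2) ^ (k - (r + 1)) := by ring
  have hgeom : ∑ k ∈ Ico (r + 1) n, (1 / 2 : ℝ) ^ (k - (r + 1)) ≤ 2 := by
    rw [sum_Ico_eq_sum_range]
    simpa using sum_geometric_two_le (n - (r + 1))
  calc |∑ k ∈ Ico (r + 1) n, f (k + 1) * coeff n (PowerSeries.mk u ^ (k + 1))|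
      ≤ ∑ k ∈ Ico (r + 1) n, D * |u (n - (r + 1))| * (1 / 2) ^ (k - (r + 1)) :=
        (abs_sum_le_sum_abs _ _).trans (sum_le_sum hterm)
    _ ≤ D * |u (n - (r + 1))| * 2 := by rw [← mul_sum]; gcongr
    _ = 2 * D * |u (n - (r + 1))| := by ring

theorem isBigO_sum_mul_coeff_mk_pow_sub (hu : Gargantuan u)
    (hne : ∀ n, 1 ≤ n → u n ≠ 0) (hu0 : u 0 = 0) {f : ℕ → ℝ}
    (hrad : ∃ R : ℝ, 0 < R ∧ ∃ C : ℝ, ∀ k, |f k| * R ^ k ≤ C) (r : ℕ) :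
    (fun n => ∑ k ∈ range (n + 1), f k * coeff n (PowerSeries.mk u ^ k)
        - ∑ j ∈ range (r + 1), (∑ k ∈ range (j + 1),
            (k + 1 : ℝ) * f (k + 1) * coeff j (PowerSeries.mk u ^ k)) * u (n - j))
      =O[atTop] fun n => u (n - (r + 1)) := by
  have hhead := IsBigO.fun_sum (s := range (r + 1)) fun k _ =>
    (hu.isBigO_coeff_mk_pow_succ_sub hne hu0 k r).const_mul_left (f (k + 1))
  refine (hhead.add (hu.isBigO_sum_Ico_mul_coeff_mk_pow hne hu0 hrad r)).congr' ?_ EventuallyEq.rfl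
  filter_upwards [eventually_ge_atTop (r + 1)] with n hn
  have hv : ∑ k ∈ range (n + 1), f k * coeff n (PowerSeries.mk u ^ k)
      = ∑ k ∈ range (r + 1), f (k + 1) * coeff n (PowerSeries.mk u ^ (k + 1))
        + ∑ k ∈ Ico (r + 1) n, f (k + 1) * coeff n (PowerSeries.mk u ^ (k + 1)) := by
    rw [sum_range_succ', sum_range_add_sum_Ico _ hn, pow_zero, coeff_one, if_neg (by omega),
      mul_zero, add_zero]
  have hw (j : ℕ) (hj : j ∈ range (r + 1)) :
      ∑ k ∈ range (j + 1), (k + 1 : ℝ) * f (k + 1) * coeff j (PowerSeries.mk u ^ k)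
        = ∑ k ∈ range (r + 1), (k + 1 : ℝ) * f (k + 1) * coeff j (PowerSeries.mk u ^ k) :=
    sum_subset (range_subset_range.2 (by simpa using hj)) fun k _ hk => by
      rw [coeff_mk_pow_of_lt hu0 (by simpa using hk), mul_zero]
  have hS : ∑ j ∈ range (r + 1), (∑ k ∈ range (j + 1),
        (k + 1 : ℝ) * f (k + 1) * coeff j (PowerSeries.mk u ^ k)) * u (n - j)
      = ∑ k ∈ range (r + 1), f (k + 1) * ((k + 1 : ℝ)
          * ∑ j ∈ range (r + 1), coeff j (PowerSeries.mk u ^ k) * u (n - j)) := by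
    rw [sum_congr rfl fun j hj => by rw [hw j hj]]
    simp only [sum_mul, mul_sum]
    rw [sum_comm]
    exact sum_congr rfl fun _ _ => sum_congr rfl fun _ _ => by ring
  rw [hv, hS]
  simp only [mul_sub, sum_sub_distrib]
  ring

theorem isTheta_of_isBigO_sub (hu : Gargantuan u) (hne : ∀ n, 1 ≤ n → u n ≠ 0)
    {v : ℕ → ℝ} {c : ℝ} (hc : c ≠ 0) (m : ℕ)
    (h : (fun n => v n - c * u (n - m)) =O[atTop] fun n => u (n - (m + 1))) :
    v =Θ[atTop] fun n => u (n - m) := by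
  have hsmall : (fun n => u (n - (m + 1))) =o[atTop] fun n => u (n - m) :=
    ((hu.isLittleO_sub_one hne).comp_tendsto (tendsto_sub_atTop_nat m)).congr_left
      fun n => by simp [Nat.sub_sub]
  have hv : v = (fun n => v n - c * u (n - m)) + fun n => c * u (n - m) := by ext; simp
  rw [hv]
  exact (h.trans_isLittleO hsmall).add_isTheta ((isTheta_const_mul_left hc).2 (isTheta_refl _ _))

theorem isBigO_sum_Icc_abs_mul_sub (hu : Gargantuan u) (m : ℕ) {p : ℕ} (hp : 1 ≤ p) :
    (fun n => ∑ k ∈ Icc (p + m) (n - (p + m)), |u (k - m) * u (n - k - m)|)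
      =O[atTop] fun n => u (n - (p + m) - m) := by
  refine ((hu.2 p hp).comp_tendsto (tendsto_sub_atTop_nat (2 * m))).congr' ?_ ?_ <;>
    filter_upwards [eventually_ge_atTop (2 * (p + m))] with n hn
  · have hIcc :
        (Icc p (n - 2 * m - p)).map (addRightEmbedding m) = Icc (p + m) (n - (p + m)) := by
      rw [map_add_right_Icc, show n - 2 * m - p + m = n - (p + m) by omega]
    rw [Function.comp_apply, ← hIcc, sum_map]
    exact sum_congr rfl fun k _ => by
      rw [addRightEmbedding_apply, Nat.add_sub_cancel,
        show n - (k + m) - m = n - 2 * m - k by omega]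
  · simp only [Function.comp_apply]; congr 1; omega

theorem of_isTheta_sub (hu : Gargantuan u) (hne : ∀ n, 1 ≤ n → u n ≠ 0) (m : ℕ)
    {v : ℕ → ℝ} (hv : v =Θ[atTop] fun n => u (n - m)) : Gargantuan v := by
  have hshift (j : ℕ) : (fun n => v (n - j)) =Θ[atTop] fun n => u (n - j - m) :=
    ⟨hv.1.comp_tendsto (tendsto_sub_atTop_nat j), hv.2.comp_tendsto (tendsto_sub_atTop_nat j)⟩
  refine ⟨((hshift 1).div hv).isBigO.trans_tendsto ?_, fun r hr => ?_⟩
  · simpa only [Function.comp_def, Nat.sub_right_comm _ 1 m] using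
      hu.1.comp (tendsto_sub_atTop_nat m)
  have hmono (j : ℕ) (hj : r ≤ j) : (fun n => v (n - j)) =O[atTop] fun n => v (n - r) := by
    refine (hshift j).1.trans (IsBigO.trans ?_ (hshift r).2)
    refine ((hu.isBigO_sub hne (j - r)).comp_tendsto (tendsto_sub_atTop_nat (r + m))).congr
      (fun n => ?_) fun n => ?_ <;> rw [Function.comp_apply] <;> congr 1 <;> omega
  -- Beyond `T` the terms are those of the gargantuan sum of `u (· - m)`; each of the boundedly
  -- many terms before `T` (and, symmetrically, after `n - T`) is `|v k| * O(v (n - r))`.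
  obtain ⟨C, hC⟩ := hv.1.bound
  obtain ⟨N, hN⟩ := eventually_atTop.1 hC
  set T := r + N + 1 + m
  have hends : (fun n => ∑ k ∈ Ico r T, |v k * v (n - k)|) =O[atTop] fun n => v (n - r) :=
    IsBigO.fun_sum fun k hk => isBigO_abs_left.2 <|
      (hmono k (mem_Ico.1 hk).1).const_mul_left (v k)
  have hmiddle :
      (fun n => ∑ k ∈ Icc T (n - T), |v k * v (n - k)|) =O[atTop] fun n => v (n - r) := by
    refine IsBigO.trans ?_ ((hu.isBigO_sum_Icc_abs_mul_sub m (p := r + N + 1) (by omega)).trans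
      (IsBigO.trans ?_ (hshift r).2))
    · refine IsBigO.of_bound (C ^ 2) (eventually_atTop.2 ⟨0, fun n _ => ?_⟩)
      rw [Real.norm_of_nonneg (sum_nonneg fun _ _ => abs_nonneg _),
        Real.norm_of_nonneg (sum_nonneg fun _ _ => abs_nonneg _), mul_sum]
      refine sum_le_sum fun k hk => ?_
      simp only [mem_Icc] at hk
      have h1 := hN k (by omega)
      have h2 := hN (n - k) (by omega)
      simp only [Real.norm_eq_abs] at h1 h2
      rw [abs_mul, abs_mul]
      calc |v k| * |v (n - k)| ≤ (C * |u (k - m)|) * (C * |u (n - k - m)|) :=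
            mul_le_mul h1 h2 (abs_nonneg _) ((abs_nonneg _).trans h1)
        _ = C ^ 2 * (|u (k - m)| * |u (n - k - m)|) := by ring
    · refine ((hu.isBigO_sub hne (N + 1 + m)).comp_tendsto (tendsto_sub_atTop_nat (r + m))).congr
        (fun n => ?_) fun n => ?_ <;> rw [Function.comp_apply] <;> congr 1 <;> omega
  refine ((hends.add hmiddle).add hends).congr' ?_ EventuallyEq.rfl
  filter_upwards [eventually_ge_atTop (2 * T)] with n hn
  rw [sum_Icc_eq_add_add_reflect _ (by omega : r ≤ T) (by omega)]
  congr 1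
  exact sum_congr rfl fun k hk => by
    rw [Nat.sub_sub_self (by simp at hk; omega), mul_comm]

end Gargantuan

/-- Bender's theorem. -/
theorem bender
    (u : ℕ → ℝ) (hu0 : u 0 = 0) (hune : ∀ n, 1 ≤ n → u n ≠ 0)
    (hgarg : Gargantuan u)
    (f : ℕ → ℝ)
    (hrad : ∃ R : ℝ, 0 < R ∧ ∃ C : ℝ, ∀ k, |f k| * R ^ k ≤ C)
    (v w : ℕ → ℝ)
    (hv : ∀ n, v n = ∑ k ∈ Finset.range (n + 1),
      f k * PowerSeries.coeff (R := ℝ) n ((PowerSeries.mk u) ^ k))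
    (hw : ∀ n, w n = ∑ k ∈ Finset.range (n + 1),
      (k + 1 : ℝ) * f (k + 1) * PowerSeries.coeff (R := ℝ) n ((PowerSeries.mk u) ^ k)) :
    (∀ r : ℕ,
      (fun n => v n - ∑ k ∈ Finset.range (r + 1), w k * u (n - k))
        =O[atTop] fun n => u (n - (r + 1))) ∧ Gargantuan v := by
  have hexp (r : ℕ) : (fun n => v n - ∑ k ∈ range (r + 1), w k * u (n - k))
      =O[atTop] fun n => u (n - (r + 1)) := by
    simpa only [hv, hw] using hgarg.isBigO_sum_mul_coeff_mk_pow_sub hune hu0 hrad r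
  refine ⟨hexp, ?_⟩
  by_cases hw0 : ∀ j, w j = 0
  · have hf (k : ℕ) : f (k + 1) = 0 :=
      (mul_eq_zero.1 (eq_zero_of_sum_mul_coeff_mk_pow_eq_zero hu0 (hune 1 le_rfl)
        (fun n => (hw n).symm.trans (hw0 n)) k)).resolve_left (by positivity)
    refine gargantuan_of_eq_zero fun n hn => ?_
    rw [hv, sum_range_succ', pow_zero, coeff_one, if_neg (by omega)]
    simp [hf]
  · simp only [not_forall] at hw0
    classical
    set m := Nat.find hw0
    have hlead : (fun n => v n - w m * u (n - m)) =O[atTop] fun n => u (n - (m + 1)) := by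
      refine (hexp m).congr_left fun n => ?_
      rw [sum_range_succ, sum_eq_zero fun j hj => by
        rw [not_not.1 (Nat.find_min hw0 (mem_range.1 hj)), zero_mul], zero_add]
    exact hgarg.of_isTheta_sub hune m (hgarg.isTheta_of_isBigO_sub hune (Nat.find_spec hw0) m hlead)
end

section
/- For every integer d ≥ 1, the sequence a_n = (d+1)^{n(n−1)/2}/n! is gargantuan. -/
open Filter Asymptotics Finset

/-!
Write `a n = q ^ (n choose 2) / n!` with `q = d + 1 > 1`. The ratio `a (n-1) / a n = n / q ^ (n-1)`
tends to `0`. For the convolution, put `k = r + i` and `n - k = r + j`; the identity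
`C(r,2) + C(r+i+j,2) = C(r+i,2) + C(r+j,2) + i j` and the crude factorial estimate
`r! (r+i+j)! ≤ (r+i)! (r+j)! (r+i+j)^i` give `a k a (n-k) ≤ a r a (n-r) ((r+i+j) / q^j)^i`.
When `i ≤ j` and `n` is large the base is at most `1/2`, so the sum is dominated by `a r a (n-r)`
times a geometric series on both ends of the range.
-/

open scoped Nat Topology

theorem Nat.add_choose_two (a b : ℕ) : (a + b).choose 2 = a.choose 2 + b.choose 2 + a * b := by
  qify
  simp only [Nat.cast_choose_two, Nat.cast_add]
  ring

theorem Nat.factorial_mul_factorial_add_add_le (r i j : ℕ) :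
    r ! * (r + i + j)! ≤ (r + i)! * (r + j)! * (r + i + j) ^ i := by
  have hsplit : (r + i + j)! ≤ (r + j)! * (r + i + j) ^ i := by
    rw [show r + i + j = r + j + i by omega, ← Nat.factorial_mul_ascFactorial]
    exact Nat.mul_le_mul_left _ (Nat.ascFactorial_le_pow_add _ _)
  calc r ! * (r + i + j)! ≤ (r + i)! * ((r + j)! * (r + i + j) ^ i) :=
        Nat.mul_le_mul (Nat.factorial_le (by omega)) hsplit
    _ = (r + i)! * (r + j)! * (r + i + j) ^ i := by ring

theorem sum_pow_le_of_injOn {ι : Type*} {ρ : ℝ} (hρ₀ : 0 ≤ ρ) (hρ₁ : ρ < 1) {s : Finset ι}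
    {f : ι → ℕ} (hf : Set.InjOn f s) : ∑ k ∈ s, ρ ^ f k ≤ (1 - ρ)⁻¹ := by
  classical
  rw [← Finset.sum_image hf, ← tsum_geometric_of_lt_one hρ₀ hρ₁]
  exact (summable_geometric_of_lt_one hρ₀ hρ₁).sum_le_tsum _ fun _ _ => pow_nonneg hρ₀ _

theorem sum_Icc_pow_min_le {ρ : ℝ} (hρ₀ : 0 ≤ ρ) (hρ₁ : ρ < 1) (r n : ℕ) :
    ∑ k ∈ Icc r (n - r), ρ ^ min (k - r) (n - r - k) ≤ 2 * (1 - ρ)⁻¹ := by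
  have hinj₁ : Set.InjOn (fun k => k - r) (Icc r (n - r) : Set ℕ) := by
    intro k hk l hl h
    simp only [coe_Icc, Set.mem_Icc] at hk hl h
    omega
  have hinj₂ : Set.InjOn (fun k => n - r - k) (Icc r (n - r) : Set ℕ) := by
    intro k hk l hl h
    simp only [coe_Icc, Set.mem_Icc] at hk hl h
    omega
  calc ∑ k ∈ Icc r (n - r), ρ ^ min (k - r) (n - r - k)
      ≤ ∑ k ∈ Icc r (n - r), (ρ ^ (k - r) + ρ ^ (n - r - k)) := by
        refine sum_le_sum fun k _ => ?_
        rcases min_choice (k - r) (n - r - k) with h | h <;> rw [h] <;>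
          linarith [pow_nonneg hρ₀ (k - r), pow_nonneg hρ₀ (n - r - k)]
    _ ≤ 2 * (1 - ρ)⁻¹ := by
        rw [sum_add_distrib, two_mul]
        exact add_le_add (sum_pow_le_of_injOn hρ₀ hρ₁ hinj₁) (sum_pow_le_of_injOn hρ₀ hρ₁ hinj₂)

noncomputable def multigraphCoeff (q : ℝ) (n : ℕ) : ℝ := q ^ n.choose 2 / n !

namespace multigraphCoeff

variable {q : ℝ}

theorem pos (hq : 0 < q) (n : ℕ) : 0 < multigraphCoeff q n := by
  unfold multigraphCoeff; positivity

theorem div_succ (hq : 0 < q) (n : ℕ) :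
    multigraphCoeff q n / multigraphCoeff q (n + 1) = (n + 1) / q ^ n := by
  unfold multigraphCoeff
  rw [Nat.choose_succ_succ', Nat.choose_one_right, pow_add, Nat.factorial_succ]
  push_cast
  field_simp

theorem tendsto_sub_one_div (hq : 1 < q) :
    Tendsto (fun n => multigraphCoeff q (n - 1) / multigraphCoeff q n) atTop (𝓝 0) := by
  rw [← tendsto_add_atTop_iff_nat 1]
  have hlim := ((tendsto_pow_const_div_const_pow_of_one_lt 1 hq).comp
    (tendsto_add_atTop_nat 1)).const_mul q
  rw [mul_zero] at hlim
  refine hlim.congr fun n => ?_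
  rw [Nat.add_sub_cancel, div_succ (by linarith)]
  simp only [Function.comp_apply, Nat.cast_add, Nat.cast_one, pow_one]
  rw [pow_succ]
  field_simp

theorem mul_le (hq : 0 < q) (r i j : ℕ) :
    multigraphCoeff q (r + i) * multigraphCoeff q (r + j) ≤
      multigraphCoeff q r * multigraphCoeff q (r + i + j) * (((r + i + j : ℕ) : ℝ) / q ^ j) ^ i := by
  have hexp : r.choose 2 + (r + i + j).choose 2 = (r + i).choose 2 + (r + j).choose 2 + j * i := by
    simp only [Nat.add_choose_two]
    ring
  have hfact : ((r ! * (r + i + j)! : ℕ) : ℝ) ≤ (((r + i)! * (r + j)! * (r + i + j) ^ i : ℕ) : ℝ) := by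
    exact_mod_cast Nat.factorial_mul_factorial_add_add_le r i j
  push_cast at hfact
  unfold multigraphCoeff
  rw [div_pow, ← pow_mul, div_mul_div_comm, div_mul_div_comm, div_mul_div_comm, ← pow_add,
    ← pow_add, hexp, div_le_div_iff₀ (by positivity) (by positivity), pow_add q _ (j * i)]
  push_cast
  calc _ ≤ q ^ ((r + i).choose 2 + (r + j).choose 2) *
        (((r + i)! : ℝ) * (r + j)! * (r + i + j) ^ i * q ^ (j * i)) := by gcongr
    _ = _ := by ring

theorem exists_mul_le_half_pow_min (hq : 1 < q) (r : ℕ) :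
    ∃ N, ∀ i j, N ≤ max i j → multigraphCoeff q (r + i) * multigraphCoeff q (r + j) ≤
      multigraphCoeff q r * multigraphCoeff q (r + i + j) * (1 / 2 : ℝ) ^ min i j := by
  have hlim : Tendsto (fun j : ℕ => (2 * r + 2 * j : ℝ) / q ^ j) atTop (𝓝 0) := by
    have h₀ := (tendsto_pow_const_div_const_pow_of_one_lt 0 hq).const_mul (2 * (r : ℝ))
    have h₁ := (tendsto_pow_const_div_const_pow_of_one_lt 1 hq).const_mul 2
    rw [mul_zero] at h₀ h₁
    have h := h₀.add h₁
    rw [add_zero] at h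
    refine h.congr fun j => ?_
    simp only [pow_zero, pow_one]
    ring
  obtain ⟨N, hN⟩ := eventually_atTop.1 (hlim.eventually_le_const (by norm_num : (0 : ℝ) < 1 / 2))
  refine ⟨N, fun i j hij => ?_⟩
  wlog hle : i ≤ j generalizing i j
  · have := this j i (by rwa [max_comm]) (by omega)
    rwa [mul_comm, add_right_comm, min_comm] at this
  rw [max_eq_right hle] at hij
  rw [min_eq_left hle]
  have hbase : ((r + i + j : ℕ) : ℝ) / q ^ j ≤ 1 / 2 := by
    refine le_trans ?_ (hN j hij)
    gcongr
    push_cast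
    exact_mod_cast (by omega : r + i + j ≤ 2 * r + 2 * j)
  calc _ ≤ multigraphCoeff q r * multigraphCoeff q (r + i + j) * (((r + i + j : ℕ) : ℝ) / q ^ j) ^ i :=
        mul_le (by linarith) r i j
    _ ≤ _ := by
        have hpos := pos (by linarith : 0 < q)
        gcongr
        exact mul_nonneg (hpos r).le (hpos _).le

theorem isBigO_sum_Icc (hq : 1 < q) (r : ℕ) :
    (fun n => ∑ k ∈ Icc r (n - r), |multigraphCoeff q k * multigraphCoeff q (n - k)|) =O[atTop]
      fun n => multigraphCoeff q (n - r) := by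
  have hpos := pos (by linarith : 0 < q)
  obtain ⟨N, hN⟩ := exists_mul_le_half_pow_min hq r
  refine IsBigO.of_bound (multigraphCoeff q r * (2 * (1 - 1 / 2)⁻¹)) ?_
  filter_upwards [eventually_ge_atTop (2 * r + 2 * N)] with n hn
  have hterm : ∀ k ∈ Icc r (n - r), |multigraphCoeff q k * multigraphCoeff q (n - k)| ≤
      multigraphCoeff q r * multigraphCoeff q (n - r) * (1 / 2 : ℝ) ^ min (k - r) (n - r - k) := by
    intro k hk
    obtain ⟨hrk, hkn⟩ := mem_Icc.1 hk
    have := hN (k - r) (n - r - k) (by omega)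
    rw [show r + (k - r) + (n - r - k) = n - r by omega, show r + (k - r) = k by omega,
      show r + (n - r - k) = n - k by omega] at this
    rwa [abs_of_pos (mul_pos (hpos k) (hpos (n - k)))]
  rw [Real.norm_of_nonneg (sum_nonneg fun _ _ => abs_nonneg _),
    Real.norm_of_nonneg (hpos (n - r)).le]
  calc _ ≤ ∑ k ∈ Icc r (n - r),
        multigraphCoeff q r * multigraphCoeff q (n - r) * (1 / 2 : ℝ) ^ min (k - r) (n - r - k) :=
        sum_le_sum hterm
    _ = multigraphCoeff q r * multigraphCoeff q (n - r) *
        ∑ k ∈ Icc r (n - r), (1 / 2 : ℝ) ^ min (k - r) (n - r - k) := by rw [mul_sum]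
    _ ≤ multigraphCoeff q r * multigraphCoeff q (n - r) * (2 * (1 - 1 / 2)⁻¹) := by
        have hgeom := sum_Icc_pow_min_le (by norm_num : (0 : ℝ) ≤ 1 / 2) (by norm_num) r n
        have hprod := mul_pos (hpos r) (hpos (n - r))
        gcongr
    _ = _ := by ring

theorem gargantuan (hq : 1 < q) : Gargantuan (multigraphCoeff q) :=
  ⟨tendsto_sub_one_div hq, fun r _ => isBigO_sum_Icc hq r⟩

end multigraphCoeff

/-- the sequence `(d+1)^(n(n-1)/2) / n!` is gargantuan for every `d ≥ 1`. -/
theorem multigraph_sequence_gargantuan (d : ℕ) (hd : 1 ≤ d) :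
    Gargantuan fun n => ((d + 1 : ℝ)) ^ (n * (n - 1) / 2) / (Nat.factorial n) := by
  have hq : (1 : ℝ) < d + 1 := by
    norm_cast
    omega
  have hfun : (fun n : ℕ => ((d + 1 : ℝ)) ^ (n * (n - 1) / 2) / (Nat.factorial n)) =
      multigraphCoeff (d + 1) := by
    funext n
    rw [multigraphCoeff, Nat.choose_two_right]
  rw [hfun]
  exact multigraphCoeff.gargantuan hq
end

section
/- The sequence a_n = (2n−1)!! (with a_0 = (−1)!! = 1) is gargantuan. -/
open Filter Asymptotics Finset

/-! Write `a n = (2n-1)‼`. Then `a (n+1) = (2n+1) a n`, so `a (n-1) / a n = 1 / (2n-1) → 0`.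
Since these step ratios increase, `k ↦ a k * a (n-k)` decreases from either end of `[r, n-r]`
towards the middle. The two end terms equal `a r * a (n-r)`; each of the `n-2r-1` interior terms
is at most `a (r+1) * a (n-r-1)`, and `(n-2r-1) * a (n-r-1) ≤ (2n-2r-1) * a (n-r-1) = a (n-r)`. -/

open Nat

namespace Nat

theorem doubleFactorial_two_mul_succ_sub_one (n : ℕ) :
    (2 * (n + 1) - 1)‼ = (2 * n + 1) * (2 * n - 1)‼ := by
  rw [show 2 * (n + 1) - 1 = 2 * n + 1 by omega, doubleFactorial_add_one]

theorem doubleFactorial_two_mul_succ_sub_one_mul_le {s m : ℕ} (h : s ≤ m) :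
    (2 * (s + 1) - 1)‼ * (2 * m - 1)‼ ≤ (2 * s - 1)‼ * (2 * (m + 1) - 1)‼ := by
  rw [doubleFactorial_two_mul_succ_sub_one, doubleFactorial_two_mul_succ_sub_one,
    mul_left_comm, mul_assoc]
  gcongr

theorem doubleFactorial_mul_le_of_mem_Icc {n s k : ℕ} (hs : s ≤ k) (hk : k ≤ n - s) :
    (2 * k - 1)‼ * (2 * (n - k) - 1)‼ ≤ (2 * s - 1)‼ * (2 * (n - s) - 1)‼ := by
  rcases hs.eq_or_lt with rfl | hs
  · rfl
  rcases hk.eq_or_lt with rfl | hk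
  · rw [Nat.sub_sub_self (by omega), mul_comm]
  calc (2 * k - 1)‼ * (2 * (n - k) - 1)‼
      ≤ (2 * (s + 1) - 1)‼ * (2 * (n - (s + 1)) - 1)‼ :=
        doubleFactorial_mul_le_of_mem_Icc (by omega) (by omega)
    _ ≤ (2 * s - 1)‼ * (2 * (n - s) - 1)‼ := by
        rw [show n - s = n - (s + 1) + 1 by omega]
        exact doubleFactorial_two_mul_succ_sub_one_mul_le (by omega)
termination_by k - s

theorem sum_Icc_doubleFactorial_mul_le {r n : ℕ} (h : 2 * r < n) :
    ∑ k ∈ Icc r (n - r), (2 * k - 1)‼ * (2 * (n - k) - 1)‼ ≤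
      (2 * (2 * r - 1)‼ + (2 * (r + 1) - 1)‼) * (2 * (n - r) - 1)‼ := by
  have hsplit : Icc r (n - r) = insert r (insert (n - r) (Icc (r + 1) (n - (r + 1)))) := by
    ext k; simp only [mem_Icc, mem_insert]; omega
  have hinner : ∑ k ∈ Icc (r + 1) (n - (r + 1)), (2 * k - 1)‼ * (2 * (n - k) - 1)‼ ≤
      (2 * (r + 1) - 1)‼ * (2 * (n - r) - 1)‼ := calc
    _ ≤ #(Icc (r + 1) (n - (r + 1))) • ((2 * (r + 1) - 1)‼ * (2 * (n - (r + 1)) - 1)‼) :=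
        sum_le_card_nsmul _ _ _ fun k hk =>
          doubleFactorial_mul_le_of_mem_Icc (mem_Icc.1 hk).1 (mem_Icc.1 hk).2
    _ ≤ (2 * (n - (r + 1)) + 1) * ((2 * (r + 1) - 1)‼ * (2 * (n - (r + 1)) - 1)‼) := by
        rw [Nat.card_Icc, smul_eq_mul]
        gcongr
        omega
    _ = (2 * (r + 1) - 1)‼ * (2 * (n - r) - 1)‼ := by
        rw [show n - r = n - (r + 1) + 1 by omega,
          doubleFactorial_two_mul_succ_sub_one (n - (r + 1))]
        ring
  rw [hsplit, sum_insert (by simp; omega), sum_insert (by simp; omega),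
    Nat.sub_sub_self (by omega)]
  linarith

end Nat

theorem tendsto_doubleFactorial_two_mul_sub_one_ratio :
    Tendsto (fun n => ((2 * (n - 1) - 1)‼ : ℝ) / (2 * n - 1)‼) atTop (nhds 0) := by
  rw [← tendsto_add_atTop_iff_nat 1]
  have hratio : ∀ n : ℕ,
      ((2 * (n + 1 - 1) - 1)‼ : ℝ) / (2 * (n + 1) - 1)‼ = (2 * n + 1 : ℝ)⁻¹ := by
    intro n
    have hpos : ((2 * n - 1)‼ : ℝ) ≠ 0 := by positivity
    rw [Nat.add_sub_cancel, doubleFactorial_two_mul_succ_sub_one]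
    push_cast
    field_simp
  simp only [hratio]
  exact tendsto_inv_atTop_zero.comp <| tendsto_atTop_add_const_right _ 1 <|
    tendsto_natCast_atTop_atTop.const_mul_atTop two_pos

theorem isBigO_sum_Icc_doubleFactorial_two_mul_sub_one (r : ℕ) :
    (fun n => ∑ k ∈ Icc r (n - r), |((2 * k - 1)‼ : ℝ) * (2 * (n - k) - 1)‼|) =O[atTop]
      fun n => ((2 * (n - r) - 1)‼ : ℝ) := by
  refine IsBigO.of_bound ((2 * (2 * r - 1)‼ + (2 * (r + 1) - 1)‼ : ℕ)) ?_
  filter_upwards [eventually_gt_atTop (2 * r)] with n hn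
  simp only [Real.norm_eq_abs, abs_mul, Nat.abs_cast]
  rw [abs_of_nonneg (sum_nonneg fun _ _ => by positivity)]
  exact_mod_cast sum_Icc_doubleFactorial_mul_le hn

/-- the sequence `(2n-1)!!` (with `(-1)!! = 1`) is gargantuan. -/
theorem double_factorial_gargantuan :
    Gargantuan fun n => (Nat.doubleFactorial (2 * n - 1) : ℝ) :=
  ⟨tendsto_doubleFactorial_two_mul_sub_one_ratio,
    fun r _ => isBigO_sum_Icc_doubleFactorial_two_mul_sub_one r⟩
end
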